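/- Let φ₀(η) = η e^{−η²/4}. With ψ_k(η) := H_{2k+1}(η)/(2√π (2k+1)!), where H_n are defined by H_0 = 1, H_{n+1} = η H_n − 2H_n', one has ∫_0^∞ φ₀'(η) ψ_k(η) dη = (−1)^k / (√π (2k−1) k!) for all k ≥ 0. -/

import Mathlib

open Polynomial Real MeasureTheory Filter Topology Finset

/-- Hermite-type polynomials: `H 0 = 1`, `H (n+1) = X * H n - 2 * (H n)'`. -/
noncomputable def hermiteH : ℕ → Polynomial ℝ
  | 0 => 1
  | n + 1 => Polynomial.X * hermiteH n - 2 * Polynomial.derivative (hermiteH n)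

/-- The adjoint eigenfunctions `ψ_k`. -/
noncomputable def psiFun (k : ℕ) (η : ℝ) : ℝ :=
  (hermiteH (2 * k + 1)).eval η / (2 * Real.sqrt π * Nat.factorial (2 * k + 1))

lemma hermiteH_succ (n : ℕ) : hermiteH (n+1) = X * hermiteH n - 2 * derivative (hermiteH n) := rfl

lemma hermiteH_deriv (n : ℕ) :
    derivative (hermiteH (n+1)) = C ((n:ℝ)+1) * hermiteH n := by
  induction n with
  | zero => simp [hermiteH]
  | succ n ih =>
      rw [hermiteH_succ (n+1)]
      simp only [derivative_sub, derivative_mul, derivative_X, one_mul, ih]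
      rw [hermiteH_succ n]
      push_cast
      simp only [derivative_mul, derivative_C, derivative_ofNat, derivative_one, map_add, map_ofNat, map_one,
        mul_zero, sub_zero, zero_mul]
      ring

lemma hermiteH_tt (n : ℕ) :
    hermiteH (n+2) = X * hermiteH (n+1) - (2 * C ((n:ℝ)+1)) * hermiteH n := by
  rw [hermiteH_succ (n+1), hermiteH_deriv n]; ring

lemma hermiteH_two : hermiteH 2 = X^2 - 2 := by
  show hermiteH (1+1) = _
  rw [hermiteH_succ 1, hermiteH_succ 0]
  simp [hermiteH]
  ring

lemma hermiteH_lin (n : ℕ) :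
    hermiteH 2 * hermiteH (n+2) =
      hermiteH (n+4) + C (4*(n:ℝ)+8) * hermiteH (n+2)
        + C (4*((n:ℝ)+2)*((n:ℝ)+1)) * hermiteH n := by
  have e4 : hermiteH (n+4) = X * hermiteH (n+3) - (2 * C ((n:ℝ)+3)) * hermiteH (n+2) := by
    have := hermiteH_tt (n+2); push_cast at this; convert this using 2 <;> ring
  have e3 : hermiteH (n+3) = X * hermiteH (n+2) - (2 * C ((n:ℝ)+2)) * hermiteH (n+1) := by
    have := hermiteH_tt (n+1); push_cast at this; convert this using 2 <;> ring
  rw [hermiteH_two, e4, e3, hermiteH_tt n]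
  simp only [map_add, map_mul, map_ofNat, map_one]
  ring

lemma integrable_poly_gauss (p : ℝ[X]) :
    Integrable (fun x : ℝ => p.eval x * Real.exp (-x^2/4)) := by
  have h : ∀ x : ℝ, p.eval x * Real.exp (-x^2/4)
      = ∑ i ∈ Finset.range (p.natDegree + 1), p.coeff i * (x ^ i * Real.exp (-(1/4:ℝ) * x^2)) := by
    intro x
    rw [Polynomial.eval_eq_sum_range, Finset.sum_mul]
    congr 1; ext i; ring_nf
  simp only [funext h]
  apply integrable_finset_sum
  intro i _
  have := (integrable_rpow_mul_exp_neg_mul_sq (b := 1/4) (by norm_num) (s := i)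
    (lt_of_lt_of_le (by norm_num) (Nat.cast_nonneg i))).const_mul (p.coeff i)
  simpa [Real.rpow_natCast] using this

lemma tendsto_poly_gauss (p : ℝ[X]) :
    Tendsto (fun x : ℝ => p.eval x * Real.exp (-x^2/4)) atTop (𝓝 0) := by
  have h1 := p.tendsto_div_exp_atTop
  have h2 : Tendsto (fun x : ℝ => Real.exp (x - x^2/4)) atTop (𝓝 0) := by
    apply Real.tendsto_exp_atBot.comp
    have ha : Tendsto (fun x : ℝ => (x/2 - 1)^2) atTop atTop := by
      apply (tendsto_pow_atTop (two_ne_zero)).comp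
      exact tendsto_atTop_add_const_right _ _ (tendsto_id.atTop_div_const two_pos)
    have : Tendsto (fun x : ℝ => 1 - (x/2-1)^2) atTop atBot := by
      simpa [sub_eq_add_neg] using tendsto_atBot_add_const_left atTop 1 (tendsto_neg_atTop_atBot.comp ha)
    convert this using 2 with x
    ring
  have := h1.mul h2
  rw [mul_zero] at this
  convert this using 2 with x
  rw [div_mul_eq_mul_div, eq_div_iff (Real.exp_ne_zero x)]
  rw [mul_assoc, ← Real.exp_add]
  ring_nf

lemma hermiteH_hasDerivAt (n : ℕ) (x : ℝ) :
    HasDerivAt (fun y : ℝ => (hermiteH n).eval y * Real.exp (-y^2/4))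
      (-(1/2) * ((hermiteH (n+1)).eval x * Real.exp (-x^2/4))) x := by
  have hg : HasDerivAt (fun y : ℝ => Real.exp (-y^2/4)) (-x/2 * Real.exp (-x^2/4)) x := by
    have h1 : HasDerivAt (fun y : ℝ => -y^2/4) (-x/2) x := by
      have := ((hasDerivAt_pow 2 x).neg).div_const 4
      refine this.congr_deriv ?_
      ring_nf
    simpa [mul_comm] using h1.exp
  have hp : HasDerivAt (fun y : ℝ => (hermiteH n).eval y)
      ((derivative (hermiteH n)).eval x) x := (hermiteH n).hasDerivAt x
  have := hp.mul hg
  refine this.congr_deriv ?_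
  rw [hermiteH_succ n]
  simp only [eval_sub, eval_mul, eval_X, eval_ofNat]
  ring

lemma key_integral (n : ℕ) :
    ∫ x in Set.Ioi (0:ℝ), (hermiteH (n+1)).eval x * Real.exp (-x^2/4)
      = 2 * (hermiteH n).eval 0 := by
  have hint : IntegrableOn
      (fun x : ℝ => -(1/2) * ((hermiteH (n+1)).eval x * Real.exp (-x^2/4))) (Set.Ioi 0) :=
    ((integrable_poly_gauss (hermiteH (n+1))).const_mul _).integrableOn
  have h := integral_Ioi_of_hasDerivAt_of_tendsto'
      (f := fun y : ℝ => (hermiteH n).eval y * Real.exp (-y^2/4))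
      (fun x _ => hermiteH_hasDerivAt n x) hint (tendsto_poly_gauss (hermiteH n))
  rw [MeasureTheory.integral_const_mul] at h
  simp only [zero_sub, neg_zero, zero_pow, ne_eq, OfNat.ofNat_ne_zero, not_false_iff,
    zero_div, Real.exp_zero, mul_one] at h
  norm_num at h
  linarith [h]

lemma hermiteH_eval0 (m : ℕ) :
    (hermiteH (2*m)).eval 0 = (-1)^m * (Nat.factorial (2*m)) / (Nat.factorial m) := by
  induction m with
  | zero => simp [hermiteH]
  | succ m ih =>
      have hidx : 2*(m+1) = (2*m)+2 := by ring
      rw [hidx, hermiteH_tt (2*m)]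
      simp only [eval_sub, eval_mul, eval_X, zero_mul, eval_ofNat, map_add, eval_C, eval_add, eval_one, eval_natCast]
      rw [ih]
      have h1 : (Nat.factorial (2*m+2) : ℝ) = (2*m+2) * (2*m+1) * Nat.factorial (2*m) := by
        have : 2*m+2 = (2*m+1)+1 := by ring
        rw [this, Nat.factorial_succ, Nat.factorial_succ]
        push_cast; ring
      have h2 : (Nat.factorial (m+1) : ℝ) = (m+1) * Nat.factorial m := by
        rw [Nat.factorial_succ]; push_cast; ring
      rw [h1, h2, pow_succ]
      have hm : (Nat.factorial m : ℝ) ≠ 0 := Nat.cast_ne_zero.2 (Nat.factorial_ne_zero m)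
      have hm1 : ((m:ℝ)+1) ≠ 0 := by positivity
      field_simp
      push_cast
      ring

theorem integral_phi0_deriv_psi (k : ℕ) :
    ∫ η in Set.Ioi (0:ℝ),
        deriv (fun s : ℝ => s * Real.exp (-s ^ 2 / 4)) η * psiFun k η
      = (-1) ^ k / (Real.sqrt π * ((2 * k : ℝ) - 1) * Nat.factorial k) := by
  have hπ : Real.sqrt π ≠ 0 := by positivity
  set D : ℝ := 2 * Real.sqrt π * Nat.factorial (2 * k + 1) with hDdef
  have hD : D ≠ 0 := by
    have : (Nat.factorial (2*k+1) : ℝ) ≠ 0 := Nat.cast_ne_zero.2 (Nat.factorial_ne_zero _)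
    positivity
  have hderiv : ∀ η : ℝ, deriv (fun s : ℝ => s * Real.exp (-s ^ 2 / 4)) η
      = -(1/2) * ((hermiteH 2).eval η * Real.exp (-η^2/4)) := by
    intro η
    have h := hermiteH_hasDerivAt 1 η
    have he : (fun y : ℝ => (hermiteH 1).eval y * Real.exp (-y^2/4))
        = fun s : ℝ => s * Real.exp (-s ^ 2 / 4) := by
      funext y
      rw [hermiteH_succ 0]
      simp [hermiteH]
    rw [he] at h
    exact h.deriv
  have hint : ∀ η : ℝ, deriv (fun s : ℝ => s * Real.exp (-s ^ 2 / 4)) η * psiFun k η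
      = (-(1/(2*D))) * ((hermiteH 2 * hermiteH (2*k+1)).eval η * Real.exp (-η^2/4)) := by
    intro η
    rw [hderiv η, psiFun, eval_mul]
    field_simp
    ring
  simp only [hint]
  rw [MeasureTheory.integral_const_mul]
  obtain _ | j := k
  · -- k = 0
    have hprod : hermiteH 2 * hermiteH (2*0+1) = hermiteH 3 + C (4:ℝ) * hermiteH 1 := by
      have h1 : hermiteH 1 = X := by rw [hermiteH_succ 0]; simp [hermiteH]
      have h2 : hermiteH 2 = X * X - 2 := by
        rw [hermiteH_succ 1, h1]; simp
      have h3 : hermiteH 3 = X * (X*X - 2) - 2 * (X + X) := by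
        rw [hermiteH_succ 2, h2]
        simp [derivative_mul]
      rw [h1, h2, h3]
      simp only [map_ofNat]
      ring
    rw [hprod]
    have hsplit : ∫ x in Set.Ioi (0:ℝ),
        (hermiteH 3 + C (4:ℝ) * hermiteH 1).eval x * Real.exp (-x^2/4)
        = (∫ x in Set.Ioi (0:ℝ), (hermiteH 3).eval x * Real.exp (-x^2/4))
          + 4 * ∫ x in Set.Ioi (0:ℝ), (hermiteH 1).eval x * Real.exp (-x^2/4) := by
      rw [← MeasureTheory.integral_const_mul, ← MeasureTheory.integral_add
        ((integrable_poly_gauss (hermiteH 3)).integrableOn)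
        (((integrable_poly_gauss (hermiteH 1)).const_mul 4).integrableOn)]
      congr 1; funext x; simp; ring
    rw [hsplit, key_integral 2, key_integral 0]
    have e2 : (hermiteH (2*1)).eval 0 = (-1:ℝ)^1 * (Nat.factorial (2*1)) / (Nat.factorial 1) :=
      hermiteH_eval0 1
    have e0 : (hermiteH (2*0)).eval 0 = (-1:ℝ)^0 * (Nat.factorial (2*0)) / (Nat.factorial 0) :=
      hermiteH_eval0 0
    norm_num at e2 e0
    rw [e2, e0, hDdef]
    norm_num [Nat.factorial]
    field_simp
    norm_num
  · -- k = j + 1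
    have hidx : 2 * (j+1) + 1 = (2*j+1) + 2 := by ring
    rw [hidx, hermiteH_lin (2*j+1)]
    push_cast
    have hsplit : ∫ x in Set.Ioi (0:ℝ),
        (hermiteH (2*j+1+4) + C (4*(2*(j:ℝ)+1)+8) * hermiteH (2*j+1+2)
          + C (4*((2*(j:ℝ)+1)+2)*((2*(j:ℝ)+1)+1)) * hermiteH (2*j+1)).eval x
            * Real.exp (-x^2/4)
        = (∫ x in Set.Ioi (0:ℝ), (hermiteH (2*j+1+4)).eval x * Real.exp (-x^2/4))
          + (4*(2*(j:ℝ)+1)+8) * (∫ x in Set.Ioi (0:ℝ),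
              (hermiteH (2*j+1+2)).eval x * Real.exp (-x^2/4))
          + (4*((2*(j:ℝ)+1)+2)*((2*(j:ℝ)+1)+1)) * ∫ x in Set.Ioi (0:ℝ),
              (hermiteH (2*j+1)).eval x * Real.exp (-x^2/4) := by
      rw [← MeasureTheory.integral_const_mul, ← MeasureTheory.integral_const_mul,
        ← MeasureTheory.integral_add (((integrable_poly_gauss _).integrableOn))
          (((integrable_poly_gauss _).const_mul _).integrableOn),
        ← MeasureTheory.integral_add]
      · congr 1; funext x; simp; ring
      · exact ((integrable_poly_gauss _).add ((integrable_poly_gauss _).const_mul _)).integrableOn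
      · exact ((integrable_poly_gauss _).const_mul _).integrableOn
    rw [hsplit]
    rw [show 2*j+1+4 = (2*j+4)+1 from by ring, key_integral (2*j+4),
        show 2*j+1+2 = (2*j+2)+1 from by ring, key_integral (2*j+2),
        show 2*j+1 = (2*j)+1 from rfl, key_integral (2*j)]
    rw [show 2*j+4 = 2*(j+2) from by ring, hermiteH_eval0 (j+2),
        show 2*(j+2) = 2*j+4 from by ring]
    rw [show 2*j+2 = 2*(j+1) from by ring, hermiteH_eval0 (j+1),
        show 2*(j+1) = 2*j+2 from by ring]
    rw [hermiteH_eval0 j]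
    have f4 : (Nat.factorial (2*j+4) : ℝ)
        = (2*(j:ℝ)+4)*(2*(j:ℝ)+3)*(2*(j:ℝ)+2)*(2*(j:ℝ)+1) * Nat.factorial (2*j) := by
      rw [show 2*j+4 = (2*j+3)+1 from by ring, Nat.factorial_succ,
          show 2*j+3 = (2*j+2)+1 from by ring, Nat.factorial_succ,
          show 2*j+2 = (2*j+1)+1 from by ring, Nat.factorial_succ,
          show 2*j+1 = (2*j)+1 from rfl, Nat.factorial_succ]
      push_cast; ring
    have f3 : (Nat.factorial (2*(j+1)+1) : ℝ)
        = (2*(j:ℝ)+3)*(2*(j:ℝ)+2)*(2*(j:ℝ)+1) * Nat.factorial (2*j) := by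
      rw [show 2*(j+1)+1 = (2*j+2)+1 from by ring, Nat.factorial_succ,
          show 2*j+2 = (2*j+1)+1 from by ring, Nat.factorial_succ,
          show 2*j+1 = (2*j)+1 from rfl, Nat.factorial_succ]
      push_cast; ring
    have f2 : (Nat.factorial (2*j+2) : ℝ)
        = (2*(j:ℝ)+2)*(2*(j:ℝ)+1) * Nat.factorial (2*j) := by
      rw [show 2*j+2 = (2*j+1)+1 from by ring, Nat.factorial_succ,
          show 2*j+1 = (2*j)+1 from rfl, Nat.factorial_succ]
      push_cast; ring
    have g2 : (Nat.factorial (j+2) : ℝ) = ((j:ℝ)+2)*((j:ℝ)+1) * Nat.factorial j := by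
      rw [Nat.factorial_succ, Nat.factorial_succ]; push_cast; ring
    have g1 : (Nat.factorial (j+1) : ℝ) = ((j:ℝ)+1) * Nat.factorial j := by
      rw [Nat.factorial_succ]; push_cast; ring
    have hfj : (Nat.factorial j : ℝ) ≠ 0 := Nat.cast_ne_zero.2 (Nat.factorial_ne_zero _)
    have hf2j : (Nat.factorial (2*j) : ℝ) ≠ 0 := Nat.cast_ne_zero.2 (Nat.factorial_ne_zero _)
    rw [f4, f2, g2, g1, hDdef, f3]
    rw [pow_succ, pow_succ]
    push_cast
    have h1 : 2*((j:ℝ)+1) - 1 = 2*(j:ℝ)+1 := by ring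
    rw [h1]
    have n1 : (2*(j:ℝ)+1) ≠ 0 := by positivity
    have n2 : (2*(j:ℝ)+2) ≠ 0 := by positivity
    have n3 : (2*(j:ℝ)+3) ≠ 0 := by positivity
    have n5 : ((j:ℝ)+1) ≠ 0 := by positivity
    have n6 : ((j:ℝ)+2) ≠ 0 := by positivity
    field_simp
    ring
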